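/- (Anticode Bound) Let C ⊆ Mat_{n×m}(F_q) be an F_q-linear rank-metric code. Then dim_{F_q}(C) ≤ max{n,m}·maxrk(C). -/

import Mathlib

/-!
For `n ≤ m` and `r < n`, evaluating the `q`-linearized polynomials `∑_{l < n - r} a_l X^{q^l}`
over `𝔽_{q^m}` at `n` points that are linearly independent over `𝔽_q` gives a Gabidulin code: an
`(n - r) m`-dimensional space of `n × m` matrices whose nonzero members have rank `> r`, since
such a polynomial has at most `q^(n - r - 1)` roots, so its kernel has dimension `< n - r`.
A code of maximum rank `r` meets it trivially, hence has dimension at most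
`n m - (n - r) m = m r`. The case `m < n` follows by transposition.
-/

open Matrix

/-- Maximum rank of a matrix rank-metric code. -/
noncomputable def maxrkMat {Fq : Type*} [Field Fq] {n m : ℕ}
    (C : Submodule Fq (Matrix (Fin n) (Fin m) Fq)) : ℕ :=
  sSup {r : ℕ | ∃ M ∈ C, M.rank = r}

open Module

section LinearAlgebra

variable {F : Type*} [Field F] {V W : Type*} [AddCommGroup V] [Module F V]
  [AddCommGroup W] [Module F W]

theorem Submodule.finrank_le_finrank_map_add_finrank_ker [FiniteDimensional F V]
    (f : V →ₗ[F] W) (U : Submodule F V) :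
    finrank F U ≤ finrank F (U.map f) + finrank F (LinearMap.ker f) := by
  have hker : finrank F (LinearMap.ker (f.domRestrict U)) ≤ finrank F (LinearMap.ker f) := by
    rw [LinearMap.ker_domRestrict, ← Submodule.finrank_map_subtype_eq, Submodule.map_comap_subtype]
    exact Submodule.finrank_mono inf_le_right
  have := LinearMap.finrank_range_add_finrank_ker (f.domRestrict U)
  rw [LinearMap.range_domRestrict] at this
  omega

theorem LinearIndependent.card_le_rank_add_finrank_ker [FiniteDimensional F V] {ι σ : Type*}
    [Fintype ι] [Fintype σ] (φ : V →ₗ[F] σ → F) {v : ι → V} (hv : LinearIndependent F v) :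
    Fintype.card ι ≤ (Matrix.of fun i => φ (v i)).rank + finrank F (LinearMap.ker φ) := by
  have hrank : (Matrix.of fun i => φ (v i)).rank =
      finrank F ((Submodule.span F (Set.range v)).map φ) := by
    rw [Matrix.rank_eq_finrank_span_row, Submodule.map_span, ← Set.range_comp]
    rfl
  rw [hrank, ← finrank_span_eq_card hv]
  exact Submodule.finrank_le_finrank_map_add_finrank_ker φ _

end LinearAlgebra

section LinearizedPolynomial

variable (Fq : Type*) [Field Fq] [Fintype Fq] {K : Type*} [Field K] [Algebra Fq K]

def linearizedPoly {d : ℕ} (a : Fin d → K) : K →ₗ[Fq] K :=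
  ∑ l : Fin d, a l • (FiniteField.frobeniusAlgHom Fq K ^ (l : ℕ)).toLinearMap

variable {Fq}

theorem linearizedPoly_apply {d : ℕ} (a : Fin d → K) (x : K) :
    linearizedPoly Fq a x = ∑ l : Fin d, a l * x ^ Fintype.card Fq ^ (l : ℕ) := by
  simp [linearizedPoly, FiniteField.coe_frobeniusAlgHom, pow_iterate]

open Polynomial in
theorem finrank_ker_linearizedPoly_lt [FiniteDimensional Fq K] {d : ℕ} {a : Fin d → K}
    (ha : a ≠ 0) : finrank Fq (LinearMap.ker (linearizedPoly Fq a)) < d := by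
  set q := Fintype.card Fq
  have hq : 1 < q := Fintype.one_lt_card
  have : Finite K := Module.finite_of_finite Fq
  obtain ⟨l₀, hl₀⟩ := Function.ne_iff.mp ha
  set P : K[X] := ∑ l : Fin d, C (a l) * X ^ q ^ (l : ℕ)
  have hP : P ≠ 0 := by
    have hcoeff : P.coeff (q ^ (l₀ : ℕ)) = a l₀ := by
      simp only [P, finsetSum_coeff, coeff_C_mul_X_pow]
      refine (Finset.sum_eq_single l₀ (fun l _ hl => if_neg fun h => hl ?_) (by simp)).trans
        (if_pos rfl)
      exact (Fin.ext (Nat.pow_right_injective hq h)).symm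
    exact fun h => hl₀ (by rw [← hcoeff, h, coeff_zero]; rfl)
  have hdeg : P.natDegree ≤ q ^ (d - 1) :=
    natDegree_sum_le_of_forall_le _ _ fun l _ =>
      (natDegree_C_mul_X_pow_le _ _).trans (Nat.pow_le_pow_right hq.le (by omega))
  have hroots : (LinearMap.ker (linearizedPoly Fq a) : Set K) ⊆ P.rootSet K := by
    intro x hx
    rw [mem_rootSet_of_ne hP]
    simpa [P, eval_finsetSum, linearizedPoly_apply] using hx
  have hcard : Nat.card (LinearMap.ker (linearizedPoly Fq a)) ≤ q ^ (d - 1) := by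
    rw [← SetLike.coe_sort_coe, Nat.card_coe_set_eq]
    exact (Set.ncard_le_ncard hroots (Set.toFinite _)).trans ((P.ncard_rootSet_le K).trans hdeg)
  rw [Module.natCard_eq_pow_finrank (K := Fq), Nat.card_eq_fintype_card (α := Fq)] at hcard
  have := (Nat.pow_le_pow_iff_right hq).mp hcard
  have := Fin.pos l₀
  omega

end LinearizedPolynomial

section Gabidulin

variable {Fq : Type*} [Field Fq] [Fintype Fq] {K : Type*} [Field K] [Algebra Fq K]
  {ι σ : Type*} [Fintype ι] [Fintype σ]

variable (Fq) in
noncomputable def gabidulin (d : ℕ) (g : ι → K) (b : Basis σ Fq K) :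
    (Fin d → K) →ₗ[Fq] Matrix ι σ Fq where
  toFun a := Matrix.of fun i => b.equivFun (linearizedPoly Fq a (g i))
  map_add' a a' := by
    ext i j
    simp [linearizedPoly_apply, add_mul, Finset.sum_add_distrib]
  map_smul' c a := by
    ext i j
    simp [linearizedPoly_apply, Finset.mul_sum]

theorem card_lt_rank_gabidulin_add [FiniteDimensional Fq K] {d : ℕ} {g : ι → K}
    (hg : LinearIndependent Fq g) (b : Basis σ Fq K) {a : Fin d → K} (ha : a ≠ 0) :
    Fintype.card ι < (gabidulin Fq d g b a).rank + d := by
  have h := hg.card_le_rank_add_finrank_ker (b.equivFun.toLinearMap ∘ₗ linearizedPoly Fq a)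
  rw [LinearEquiv.ker_comp] at h
  have := finrank_ker_linearizedPoly_lt (Fq := Fq) ha
  exact h.trans_lt (Nat.add_lt_add_left this _)

end Gabidulin

section RankMetricCode

variable {Fq : Type*} [Field Fq] [Fintype Fq] {n m r : ℕ}

theorem exists_submodule_finrank_eq_forall_rank_gt (hnm : n ≤ m) (hrn : r < n) :
    ∃ A : Submodule Fq (Matrix (Fin n) (Fin m) Fq),
      finrank Fq A = (n - r) * m ∧ ∀ M ∈ A, M ≠ 0 → r < M.rank := by
  obtain ⟨p, _⟩ := CharP.exists Fq
  have : Fact p.Prime := ⟨CharP.char_is_prime Fq p⟩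
  have : NeZero m := ⟨by omega⟩
  let K := FiniteField.Extension Fq p m
  let b : Basis (Fin m) Fq K :=
    Module.finBasisOfFinrankEq Fq K (FiniteField.finrank_extension Fq p m)
  let g : Fin n → K := b ∘ Fin.castLE hnm
  have hg : LinearIndependent Fq g := b.linearIndependent.comp _ (Fin.castLE_injective hnm)
  let Φ := gabidulin Fq (n - r) g b
  have hrank : ∀ a ≠ 0, r < (Φ a).rank := fun a ha => by
    have : n < (Φ a).rank + (n - r) := by
      simpa using card_lt_rank_gabidulin_add hg b ha
    omega
  have hinj : Function.Injective Φ := by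
    rw [← LinearMap.ker_eq_bot, Submodule.eq_bot_iff]
    intro a ha
    by_contra ha'
    have := hrank a ha'
    rw [LinearMap.mem_ker.mp ha, Matrix.rank_zero] at this
    omega
  refine ⟨LinearMap.range Φ, ?_, ?_⟩
  · rw [LinearMap.finrank_range_of_inj hinj, Module.finrank_pi_fintype]
    simp [FiniteField.finrank_extension, K]
  · rintro _ ⟨a, rfl⟩ hM
    exact hrank a (by rintro rfl; simp at hM)

theorem finrank_le_mul_of_forall_rank_le (hnm : n ≤ m)
    (C : Submodule Fq (Matrix (Fin n) (Fin m) Fq)) (hC : ∀ M ∈ C, M.rank ≤ r) :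
    finrank Fq C ≤ m * r := by
  rcases le_or_gt n r with hrn | hrn
  · calc finrank Fq C ≤ finrank Fq (Matrix (Fin n) (Fin m) Fq) := Submodule.finrank_le C
      _ = n * m := by simp [finrank_matrix]
      _ ≤ m * r := by rw [mul_comm]; exact Nat.mul_le_mul_left m hrn
  obtain ⟨A, hA, hrank⟩ := exists_submodule_finrank_eq_forall_rank_gt (Fq := Fq) hnm hrn
  have hdisj : Disjoint C A := by
    rw [Submodule.disjoint_def]
    intro M hMC hMA
    by_contra hM
    exact (hC M hMC).not_gt (hrank M hMA hM)
  have hdim := Submodule.finrank_add_finrank_le_of_disjoint hdisj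
  rw [hA, finrank_matrix] at hdim
  simp only [Fintype.card_fin, finrank_self, mul_one] at hdim
  have : (n - r) * m + r * m = n * m := by rw [← add_mul, Nat.sub_add_cancel hrn.le]
  linarith [mul_comm m r]

theorem finrank_le_max_mul_of_forall_rank_le (C : Submodule Fq (Matrix (Fin n) (Fin m) Fq))
    (hC : ∀ M ∈ C, M.rank ≤ r) :
    finrank Fq C ≤ max n m * r := by
  rcases le_total n m with h | h
  · exact (finrank_le_mul_of_forall_rank_le h C hC).trans
      (Nat.mul_le_mul_right _ (le_max_right n m))
  · let e := transposeLinearEquiv (Fin n) (Fin m) Fq Fq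
    have hCt : ∀ M ∈ C.map e.toLinearMap, M.rank ≤ r := by
      rintro _ ⟨M, hM, rfl⟩
      exact (rank_transpose M).trans_le (hC M hM)
    calc finrank Fq C = finrank Fq (C.map e.toLinearMap) := (e.finrank_map_eq C).symm
      _ ≤ n * r := finrank_le_mul_of_forall_rank_le h _ hCt
      _ ≤ max n m * r := Nat.mul_le_mul_right _ (le_max_left n m)

end RankMetricCode

theorem rank_le_maxrkMat {Fq : Type*} [Field Fq] {n m : ℕ}
    {C : Submodule Fq (Matrix (Fin n) (Fin m) Fq)} {M : Matrix (Fin n) (Fin m) Fq} (hM : M ∈ C) :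
    M.rank ≤ maxrkMat C :=
  le_csSup ⟨n, by rintro _ ⟨M, -, rfl⟩; exact M.rank_le_height⟩ ⟨M, hM, rfl⟩

theorem stmt4 {Fq : Type*} [Field Fq] [Fintype Fq] {n m : ℕ}
    (C : Submodule Fq (Matrix (Fin n) (Fin m) Fq)) :
    Module.finrank Fq C ≤ max n m * maxrkMat C :=
  finrank_le_max_mul_of_forall_rank_le C fun _ hM => rank_le_maxrkMat hM
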